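/- Let p ∈ (0,1) and let (a_k)_{k≥1} be defined by a_k = (1 − p)^{2^{⌊(⌊c log k⌋)^{1/3}⌋}} for a constant c > 0. Then the series ∑_{k≥1} a_k converges. -/
import Mathlib

open Filter Real Asymptotics

/-- Key asymptotic fact: `2 ^ ⌊(⌊t⌋₊ : ℝ)^(1/3)⌋₊` eventually dominates any linear function. -/
lemma aux_eventually_sde (A : ℝ) :
    ∀ᶠ t : ℝ in atTop,
      A * t ≤ (2:ℝ) ^ (Nat.floor ((Nat.floor t : ℝ) ^ ((1:ℝ)/3))) := by
  have h2 : (0:ℝ) < Real.log 2 := Real.log_pos one_lt_two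
  have ho : (fun s : ℝ => A * (s ^ (3:ℕ) + 1)) =o[atTop]
      fun s => Real.exp (Real.log 2 * s) := by
    have h3 : (fun s : ℝ => s ^ (3:ℕ)) =o[atTop] fun s => Real.exp (Real.log 2 * s) :=
      isLittleO_pow_exp_pos_mul_atTop 3 h2
    have h1 : (fun _ : ℝ => (1:ℝ)) =o[atTop] fun s => Real.exp (Real.log 2 * s) := by
      simpa using isLittleO_pow_exp_pos_mul_atTop 0 h2
    simpa [mul_add] using (h3.add h1).const_mul_left A
  have hs : ∀ᶠ s : ℝ in atTop,
      A * (s ^ (3:ℕ) + 1) ≤ Real.exp (Real.log 2 * (s - 1)) := by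
    filter_upwards [ho.def (by norm_num : (0:ℝ) < 1/2)] with s hsle
    have h1 : A * (s ^ (3:ℕ) + 1) ≤ ‖A * (s ^ (3:ℕ) + 1)‖ := le_abs_self _
    have h2' : ‖Real.exp (Real.log 2 * s)‖ = Real.exp (Real.log 2 * s) :=
      Real.norm_of_nonneg (Real.exp_pos _).le
    have hexp : Real.exp (Real.log 2 * (s - 1))
        = Real.exp (Real.log 2 * s) * Real.exp (-Real.log 2) := by
      rw [← Real.exp_add]; ring_nf
    have hhalf : Real.exp (-Real.log 2) = 1/2 := by
      rw [Real.exp_neg, Real.exp_log (by norm_num : (0:ℝ) < 2)]; norm_num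
    rw [hexp, hhalf]
    calc A * (s ^ (3:ℕ) + 1) ≤ (1/2) * ‖Real.exp (Real.log 2 * s)‖ := h1.trans hsle
      _ = Real.exp (Real.log 2 * s) * (1/2) := by rw [h2']; ring
  have hst : Tendsto (fun t : ℝ => (t - 1) ^ ((1:ℝ)/3)) atTop atTop :=
    (tendsto_rpow_atTop (by norm_num : (0:ℝ) < 1/3)).comp
      (tendsto_atTop_add_const_right atTop (-1) tendsto_id)
  filter_upwards [hst.eventually hs, eventually_ge_atTop (1:ℝ)] with t h1 ht1
  have ht0 : (0:ℝ) ≤ t - 1 := by linarith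
  set s : ℝ := (t - 1) ^ ((1:ℝ)/3) with hsdef
  have hcube : s ^ (3:ℕ) = t - 1 := by
    rw [hsdef, ← Real.rpow_natCast ((t - 1) ^ ((1:ℝ)/3)) 3, ← Real.rpow_mul ht0]
    norm_num
  have hAt : A * (s ^ (3:ℕ) + 1) = A * t := by rw [hcube]; ring
  -- bound the exponent from below
  have hfl1 : t - 1 < (Nat.floor t : ℝ) := Nat.sub_one_lt_floor t
  have hsle2 : s ≤ (Nat.floor t : ℝ) ^ ((1:ℝ)/3) :=
    Real.rpow_le_rpow ht0 hfl1.le (by norm_num)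
  have hfl2 : (Nat.floor t : ℝ) ^ ((1:ℝ)/3) - 1
      < (Nat.floor ((Nat.floor t : ℝ) ^ ((1:ℝ)/3)) : ℝ) :=
    Nat.sub_one_lt_floor _
  have hexpo : s - 1 ≤ (Nat.floor ((Nat.floor t : ℝ) ^ ((1:ℝ)/3)) : ℝ) := by linarith
  have h2rw : Real.exp (Real.log 2 * (s - 1)) = (2:ℝ) ^ (s - 1) := by
    rw [Real.rpow_def_of_pos (by norm_num : (0:ℝ) < 2)]
  calc A * t = A * (s ^ (3:ℕ) + 1) := hAt.symm
    _ ≤ Real.exp (Real.log 2 * (s - 1)) := h1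
    _ = (2:ℝ) ^ (s - 1) := h2rw
    _ ≤ (2:ℝ) ^ ((Nat.floor ((Nat.floor t : ℝ) ^ ((1:ℝ)/3)) : ℝ)) :=
        Real.rpow_le_rpow_of_exponent_le one_le_two hexpo
    _ = (2:ℝ) ^ (Nat.floor ((Nat.floor t : ℝ) ^ ((1:ℝ)/3))) := Real.rpow_natCast _ _

/-- For `p ∈ (0,1)` and `c > 0`, the series with terms
`(1 − p)^(2^⌊(⌊c log k⌋)^{1/3}⌋)` for `k ≥ 1` converges. -/
theorem summable_stretched_double_exponential
    (p c : ℝ) (hp0 : 0 < p) (hp1 : p < 1) (hc : 0 < c) :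
    Summable (fun k : ℕ =>
      (1 - p) ^ (2 ^ (Nat.floor ((Nat.floor (c * Real.log (k + 1)) : ℝ) ^ ((1:ℝ)/3))))) := by
  set r : ℝ := 1 - p with hrdef
  have hr0 : 0 < r := by simp [hrdef]; linarith
  have hr1 : r < 1 := by simp [hrdef]; linarith
  have hlog : Real.log r < 0 := Real.log_neg hr0 hr1
  set L : ℝ := -Real.log r with hLdef
  have hL0 : 0 < L := by simp [hLdef]; linarith
  have htend : Tendsto (fun k : ℕ => c * Real.log ((k:ℝ) + 1)) atTop atTop := by
    apply Tendsto.const_mul_atTop hc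
    exact Real.tendsto_log_atTop.comp
      (tendsto_atTop_add_const_right atTop 1 tendsto_natCast_atTop_atTop)
  have hEv := htend.eventually (aux_eventually_sde (2 / (c * L)))
  apply summable_of_isBigO_nat (g := fun k : ℕ => 1 / (k:ℝ) ^ 2)
    (Real.summable_one_div_nat_pow.mpr one_lt_two)
  apply IsBigO.of_bound 1
  filter_upwards [hEv, eventually_ge_atTop 1] with k hk hk1
  set E : ℕ := Nat.floor ((Nat.floor (c * Real.log ((k:ℝ) + 1)) : ℝ) ^ ((1:ℝ)/3)) with hEdef
  have hk1' : (1:ℝ) ≤ (k:ℝ) := by exact_mod_cast hk1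
  have hkpos : (0:ℝ) < (k:ℝ) := by linarith
  have hlogpos : 0 ≤ Real.log ((k:ℝ) + 1) := Real.log_nonneg (by linarith)
  -- from hk : 2/(c*L) * (c * log(k+1)) ≤ 2^E
  have hkey : 2 * Real.log ((k:ℝ) + 1) / L ≤ (2:ℝ) ^ E := by
    have : 2 / (c * L) * (c * Real.log ((k:ℝ) + 1)) = 2 * Real.log ((k:ℝ) + 1) / L := by
      field_simp
    rw [← this]
    exact hk
  have hn : (2:ℝ) ^ E = ((2 ^ E : ℕ) : ℝ) := by push_cast; ring
  have hmul : 2 * Real.log ((k:ℝ) + 1) ≤ ((2 ^ E : ℕ) : ℝ) * L := by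
    rw [← hn]
    calc 2 * Real.log ((k:ℝ) + 1) = 2 * Real.log ((k:ℝ) + 1) / L * L := by
          field_simp
      _ ≤ (2:ℝ) ^ E * L := by
          apply mul_le_mul_of_nonneg_right hkey hL0.le
  have hrpow : r ^ (2 ^ E : ℕ) = Real.exp (((2 ^ E : ℕ) : ℝ) * Real.log r) := by
    rw [Real.exp_nat_mul, Real.exp_log hr0]
  have hbound : r ^ (2 ^ E : ℕ) ≤ 1 / ((k:ℝ) + 1) ^ 2 := by
    rw [hrpow]
    have h1 : ((2 ^ E : ℕ) : ℝ) * Real.log r ≤ -(2 * Real.log ((k:ℝ) + 1)) := by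
      have : ((2 ^ E : ℕ) : ℝ) * Real.log r = -(((2 ^ E : ℕ) : ℝ) * L) := by
        rw [hLdef]; ring
      rw [this]
      linarith
    calc Real.exp (((2 ^ E : ℕ) : ℝ) * Real.log r)
        ≤ Real.exp (-(2 * Real.log ((k:ℝ) + 1))) := Real.exp_le_exp.mpr h1
      _ = 1 / ((k:ℝ) + 1) ^ 2 := by
          have h2 : (2:ℝ) * Real.log ((k:ℝ) + 1) = Real.log (((k:ℝ) + 1) ^ 2) := by
            rw [Real.log_pow]; push_cast; ring
          rw [Real.exp_neg, h2, Real.exp_log (by positivity), one_div]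
  have hfinal : r ^ (2 ^ E : ℕ) ≤ 1 / (k:ℝ) ^ 2 := by
    refine hbound.trans ?_
    apply one_div_le_one_div_of_le (by positivity)
    nlinarith
  have hnonneg : 0 ≤ r ^ (2 ^ E : ℕ) := pow_nonneg hr0.le _
  rw [Real.norm_of_nonneg hnonneg, Real.norm_of_nonneg (by positivity), one_mul]
  exact hfinal
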